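/- For d = 1 and γ = 0 the Berezin–Li–Yau-type bound fails for all Robin parameters: for every β > 0 there exists λ > 0 such that the counting function of the Robin Laplacian on (0,1) with parameter β√λ satisfies Tr(−Δ^{β√λ}_{(0,1)} − λ)₋^0 > √λ/π. -/

import Mathlib

/-!
The Robin eigenvalues are the squares `μ = t²` of the positive roots `t` of the secular function
`2 t cos t + (b - t² / b) sin t`, which is positive for small `t > 0`. With `b = β s` its value
at `t = s` is `s (2 cos s + (β - 1/β) sin s)`, which tends to `-2π` as `s → π`. So for `s`
slightly below `π` there is a root in `(0, s)`, i.e. an eigenvalue `≤ λ := s²`. The secular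
function is analytic and not identically zero, so only finitely many eigenvalues lie below `λ`;
hence the counting function is at least `1 > s / π = √λ / π`.
-/

open Real

/-- The set of eigenvalues of the Robin Laplacian on (0,1) with parameter `b`,
characterized by the transcendental equation. -/
def RobinEV (b : ℝ) : Set ℝ :=
  {μ : ℝ | 0 < μ ∧
    2 * Real.sqrt μ * Real.cos (Real.sqrt μ)
      + (b - μ / b) * Real.sin (Real.sqrt μ) = 0}

theorem AnalyticOnNhd.finite_inter_zeros_of_isCompact {𝕜 E : Type*} [NontriviallyNormedField 𝕜]
    [ConnectedSpace 𝕜] [NormedAddCommGroup E] [NormedSpace 𝕜 E] {f : 𝕜 → E}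
    (hf : AnalyticOnNhd 𝕜 f Set.univ) {x : 𝕜} (hx : f x ≠ 0) {K : Set 𝕜} (hK : IsCompact K) :
    (K ∩ f ⁻¹' {0}).Finite := by
  have hcodiscrete := Filter.codiscreteWithin_mono (Set.subset_univ K)
    (hf.preimage_zero_mem_codiscrete hx)
  simpa [Set.sdiff_eq] using hK.finite_sdiff_of_mem_codiscreteWithin hcodiscrete

noncomputable def robinSecular (b t : ℝ) : ℝ := 2 * t * cos t + (b - t ^ 2 / b) * sin t

theorem mem_robinEV_iff {b μ : ℝ} : μ ∈ RobinEV b ↔ 0 < μ ∧ robinSecular b (√μ) = 0 := by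
  refine and_congr_right fun hμ => ?_
  rw [robinSecular, sq_sqrt hμ.le]

theorem analyticOnNhd_robinSecular (b : ℝ) : AnalyticOnNhd ℝ (robinSecular b) Set.univ := by
  have : ContDiff ℝ ⊤ (robinSecular b) := by unfold robinSecular; fun_prop
  exact this.analyticOnNhd

theorem continuous_robinSecular (b : ℝ) : Continuous (robinSecular b) := by
  unfold robinSecular; fun_prop

theorem robinSecular_pos {b t : ℝ} (ht : 0 < t) (htb : t < b) (htπ : t < π / 2) :
    0 < robinSecular b t := by
  have hcos : 0 < cos t := cos_pos_of_mem_Ioo ⟨by linarith, htπ⟩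
  have hsin : 0 < sin t := sin_pos_of_pos_of_lt_pi ht (by linarith)
  have hcoef : 0 < b - t ^ 2 / b := by
    rw [sub_pos, div_lt_iff₀ (ht.trans htb)]
    nlinarith
  unfold robinSecular
  positivity

theorem exists_robinSecular_pos {b : ℝ} (hb : 0 < b) {s : ℝ} (hs : 0 < s) :
    ∃ t ∈ Set.Ioo 0 s, 0 < robinSecular b t := by
  set m := min s (min b (π / 2))
  have hm : 0 < m := lt_min hs (lt_min hb (by positivity))
  obtain ⟨hms, hmb, hmπ⟩ : m ≤ s ∧ m ≤ b ∧ m ≤ π / 2 := by simp [m]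
  refine ⟨m / 2, ⟨half_pos hm, ?_⟩, robinSecular_pos (half_pos hm) ?_ ?_⟩ <;> linarith

theorem exists_robinSecular_neg {β : ℝ} (hβ : 0 < β) :
    ∃ s ∈ Set.Ioo 0 π, robinSecular (β * s) s < 0 := by
  have hcont : ContinuousAt (fun s => robinSecular (β * s) s) π := by
    unfold robinSecular
    fun_prop (disch := positivity)
  have hπ : robinSecular (β * π) π < 0 := by
    simp [robinSecular, pi_pos]
  have hev := (hcont.continuousWithinAt (s := Set.Iio π)).eventually_lt_const hπ
  obtain ⟨s, hs, hneg⟩ := (hev.and (Ioo_mem_nhdsLT pi_pos)).exists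
  exact ⟨s, hneg, hs⟩

theorem exists_mem_robinEV_le_sq {b s : ℝ} (hb : 0 < b) (hs : 0 < s)
    (hneg : robinSecular b s < 0) : ∃ μ ∈ RobinEV b, μ ≤ s ^ 2 := by
  obtain ⟨t₁, ⟨ht₁, ht₁s⟩, hpos⟩ := exists_robinSecular_pos hb hs
  obtain ⟨t, ⟨ht₁t, hts⟩, ht⟩ := intermediate_value_Icc' ht₁s.le
    (continuous_robinSecular b).continuousOn ⟨hneg.le, hpos.le⟩
  have ht0 : 0 < t := ht₁.trans_le ht₁t
  exact ⟨t ^ 2, mem_robinEV_iff.2 ⟨by positivity, by rwa [sqrt_sq ht0.le]⟩,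
    pow_le_pow_left₀ ht0.le hts 2⟩

theorem finite_robinEV_le {b : ℝ} (hb : 0 < b) (L : ℝ) : {μ ∈ RobinEV b | μ ≤ L}.Finite := by
  obtain ⟨t₁, -, hpos⟩ := exists_robinSecular_pos hb one_pos
  have hzeros := (analyticOnNhd_robinSecular b).finite_inter_zeros_of_isCompact hpos.ne'
    (isCompact_Icc (a := 0) (b := √L))
  refine (hzeros.image (· ^ 2)).subset fun μ ⟨hμ, hμL⟩ => ?_
  obtain ⟨hμ0, hroot⟩ := mem_robinEV_iff.1 hμ
  exact ⟨√μ, ⟨⟨sqrt_nonneg μ, sqrt_le_sqrt hμL⟩, hroot⟩, sq_sqrt hμ0.le⟩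

/-- for d = 1 and γ = 0 the Berezin–Li–Yau-type bound fails for
all Robin parameters: for every β > 0 there is λ > 0 with
#{eigenvalues of -Δ^{β√λ}_{(0,1)} that are ≤ λ} > √λ/π. -/
theorem counting_bound_fails_one_dim :
    ∀ β : ℝ, 0 < β → ∃ lam : ℝ, 0 < lam ∧
      Real.sqrt lam / Real.pi <
        (({μ ∈ RobinEV (β * Real.sqrt lam) | μ ≤ lam}).ncard : ℝ) := by
  intro β hβ
  obtain ⟨s, ⟨hs0, hsπ⟩, hneg⟩ := exists_robinSecular_neg hβ
  refine ⟨s ^ 2, by positivity, ?_⟩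
  rw [sqrt_sq hs0.le]
  have hb : 0 < β * s := mul_pos hβ hs0
  have hnonempty : {μ ∈ RobinEV (β * s) | μ ≤ s ^ 2}.Nonempty :=
    exists_mem_robinEV_le_sq hb hs0 hneg
  have hcard : 1 ≤ {μ ∈ RobinEV (β * s) | μ ≤ s ^ 2}.ncard :=
    (Set.ncard_pos (finite_robinEV_le hb _)).2 hnonempty
  calc s / π < 1 := (div_lt_one pi_pos).2 hsπ
    _ ≤ _ := by exact_mod_cast hcard
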